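/- arXiv:2409.15257 — 3 statements merged into one kernel-verified Lean document; each statement's English description precedes it below -/
import Mathlib

section
/- In an algebraic complete lattice L, if a, c ∈ L with c compact and c ≰ a, then there exists a completely meet-irreducible element a⁺ ∈ L such that a ≤ a⁺ and c ≰ a⁺. -/
/-- An element `a` of a complete lattice is completely meet-irreducible if
whenever `a` is the infimum of a set `S`, then `a ∈ S`. -/
def CompletelyMeetIrreducible {L : Type*} [CompleteLattice L] (a : L) : Prop :=
  ∀ S : Set L, a = sInf S → a ∈ S

/-!
Compactness of `c` makes `{x | c ≰ x}` closed under suprema of nonempty chains, so Zorn's lemma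
extends `a` to an element `m` maximal with `c ≰ m`. Everything strictly above `m` lies above `c`;
hence if `m = ⨅ S` with `m ∉ S`, then `c ≤ ⨅ S = m`, which is impossible.
-/

section

variable {L : Type*} [CompleteLattice L] {c : L}

theorem IsCompactElement.not_le_sSup_of_isChain (hc : IsCompactElement c) {s : Set L}
    (hne : s.Nonempty) (hchain : IsChain (· ≤ ·) s) (hs : ∀ x ∈ s, ¬ c ≤ x) : ¬ c ≤ sSup s :=
  fun hle ↦
    let ⟨x, hx, hcx⟩ := (CompleteLattice.isCompactElement_iff_le_of_directed_sSup_le _ c).1 hc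
      s hne hchain.directedOn hle
    hs x hx hcx

theorem IsCompactElement.exists_le_maximal_not_le (hc : IsCompactElement c) {a : L}
    (h : ¬ c ≤ a) : ∃ m, a ≤ m ∧ Maximal (fun x ↦ ¬ c ≤ x) m :=
  zorn_le_nonempty₀ {x | ¬ c ≤ x}
    (fun s hs hchain y hy ↦
      ⟨sSup s, hc.not_le_sSup_of_isChain ⟨y, hy⟩ hchain hs, fun _ hz ↦ le_sSup hz⟩) a h

theorem completelyMeetIrreducible_of_maximal_not_le {m : L}
    (hm : Maximal (fun x ↦ ¬ c ≤ x) m) : CompletelyMeetIrreducible m := by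
  intro S hS
  by_contra hmS
  refine hm.prop (hS ▸ le_sInf fun s hs ↦ ?_)
  have hms : m < s := (hS ▸ sInf_le hs).lt_of_ne fun e ↦ hmS (e ▸ hs)
  exact not_not.1 (hm.not_prop_of_gt hms)

end

theorem exists_completelyMeetIrreducible_extension_general
    {L : Type*} [CompleteLattice L]
    (a c : L) (hc : IsCompactElement c) (h : ¬ c ≤ a) :
    ∃ aplus : L, a ≤ aplus ∧ ¬ c ≤ aplus ∧ CompletelyMeetIrreducible aplus :=
  let ⟨m, ham, hm⟩ := hc.exists_le_maximal_not_le h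
  ⟨m, ham, hm.prop, completelyMeetIrreducible_of_maximal_not_le hm⟩

/-- In an algebraic (compactly generated) complete lattice, if `c` is compact and `c ≰ a`,
then there is a completely meet-irreducible `a⁺ ≥ a` with `c ≰ a⁺`. -/
theorem exists_completelyMeetIrreducible_extension
    {L : Type*} [CompleteLattice L] [IsCompactlyGenerated L]
    (a c : L) (hc : IsCompactElement c) (h : ¬ c ≤ a) :
    ∃ aplus : L, a ≤ aplus ∧ ¬ c ≤ aplus ∧ CompletelyMeetIrreducible aplus :=
  exists_completelyMeetIrreducible_extension_general a c hc h
end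

section
/- Let ⊢ be a finitary consequence relation on formulas of a propositional language containing classical disjunction with the properties that Γ, φ∨ψ ⊢ χ iff both Γ, φ ⊢ χ and Γ, ψ ⊢ χ. Then every theory Γ (set closed under ⊢) that is completely meet-irreducible in the lattice of theories is a prime theory: Γ ⊢ φ∨ψ implies Γ ⊢ φ or Γ ⊢ ψ. -/
/-- A set of formulas is a theory of the consequence relation `Turn` if it is
deductively closed. -/
def IsTheory {Fm : Type*} (Turn : Set Fm → Fm → Prop) (Γ : Set Fm) : Prop :=
  ∀ φ, Turn Γ φ → φ ∈ Γ

/-- A completely meet-irreducible theory of a finitary consequence relation satisfying the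
classical disjunction property is prime. -/
theorem completelyMeetIrreducible_theory_is_prime
    {Fm : Type*} (dis : Fm → Fm → Fm) (Turn : Set Fm → Fm → Prop)
    -- `Turn` is a consequence relation:
    (hrefl : ∀ (Γ : Set Fm) (φ : Fm), φ ∈ Γ → Turn Γ φ)
    (hmono : ∀ (Γ Δ : Set Fm) (φ : Fm), Γ ⊆ Δ → Turn Γ φ → Turn Δ φ)
    (hcut : ∀ (Γ Δ : Set Fm) (φ : Fm), (∀ ψ ∈ Δ, Turn Γ ψ) → Turn Δ φ → Turn Γ φ)
    -- finitary:
    (hfin : ∀ (Γ : Set Fm) (φ : Fm), Turn Γ φ → ∃ Γ' ⊆ Γ, Γ'.Finite ∧ Turn Γ' φ)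
    -- disjunction property:
    (hdis : ∀ (Γ : Set Fm) (φ ψ χ : Fm),
      Turn (insert (dis φ ψ) Γ) χ ↔ Turn (insert φ Γ) χ ∧ Turn (insert ψ Γ) χ)
    -- Γ is a completely meet-irreducible theory:
    (Γ : Set Fm) (hΓ : IsTheory Turn Γ)
    (hirr : ∀ S : Set (Set Fm), (∀ Δ ∈ S, IsTheory Turn Δ) → Γ = ⋂₀ S → Γ ∈ S) :
    ∀ φ ψ, Turn Γ (dis φ ψ) → Turn Γ φ ∨ Turn Γ ψ := by

  intro φ ψ h
  by_contra hc
  push_neg at hc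
  obtain ⟨hφ, hψ⟩ := hc
  set Γφ : Set Fm := {χ | Turn (insert φ Γ) χ} with hΓφ
  set Γψ : Set Fm := {χ | Turn (insert ψ Γ) χ} with hΓψ
  have hthφ : IsTheory Turn Γφ := fun χ hχ =>
    hcut _ _ _ (fun δ hδ => hδ) hχ
  have hthψ : IsTheory Turn Γψ := fun χ hχ =>
    hcut _ _ _ (fun δ hδ => hδ) hχ
  have key : Γ = ⋂₀ {Γφ, Γψ} := by
    apply Set.Subset.antisymm
    · intro χ hχ
      simp only [Set.mem_sInter, Set.mem_insert_iff, Set.mem_singleton_iff]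
      rintro Δ (rfl | rfl)
      · exact hmono Γ _ _ (Set.subset_insert _ _) (hrefl _ _ hχ)
      · exact hmono Γ _ _ (Set.subset_insert _ _) (hrefl _ _ hχ)
    · intro χ hχ
      simp only [Set.mem_sInter, Set.mem_insert_iff, Set.mem_singleton_iff] at hχ
      have h1 : Turn (insert φ Γ) χ := hχ Γφ (Or.inl rfl)
      have h2 : Turn (insert ψ Γ) χ := hχ Γψ (Or.inr rfl)
      have h3 : Turn (insert (dis φ ψ) Γ) χ := (hdis Γ φ ψ χ).mpr ⟨h1, h2⟩
      apply hΓ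
      refine hcut Γ (insert (dis φ ψ) Γ) χ ?_ h3
      rintro δ (rfl | hδ)
      · exact h
      · exact hrefl _ _ hδ
  have := hirr {Γφ, Γψ} (by rintro Δ (rfl | rfl) <;> assumption) key
  rcases this with h' | h'
  · exact hφ (hrefl _ _ (show φ ∈ Γ by rw [h']; exact hrefl _ _ (Set.mem_insert _ _)))
  · exact hψ (hrefl _ _ (show ψ ∈ Γ by rw [h']; exact hrefl _ _ (Set.mem_insert _ _)))
end

section
/- In the Hilbert system PAI⁰ (containing axioms O1: φ≺φ, O2: transitivity of ≺, O4: negation transparency, C1: disjuncts below disjunction, C2: join property, C3: congruence of ≺-equivalence with respect to →), the relation ~Γ on translated formulas defined by N(φ) ~Γ N(ψ) iff both φ≺ψ ∈ Γ and ψ≺φ ∈ Γ, for a theory Γ, is a congruence with respect to the operations ⊕ (where N(φ)⊕N(ψ) = N(φ∨ψ)) and ⊙ (where N(φ)⊙N(ψ) = N(φ→ψ)). -/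
/-- Formulas over the language ⟨¬, ∨, □, →⟩. -/
inductive PFormula where
  | var : ℕ → PFormula
  | neg : PFormula → PFormula
  | or : PFormula → PFormula → PFormula
  | box : PFormula → PFormula
  | arr : PFormula → PFormula → PFormula

namespace PFormula

def imp (φ ψ : PFormula) : PFormula := .or (.neg φ) ψ
def and (φ ψ : PFormula) : PFormula := .neg (.or (.neg φ) (.neg ψ))
def eqv (φ ψ : PFormula) : PFormula := and (imp φ ψ) (imp ψ φ)
/-- The content-inclusion connective `φ ≺ ψ := ψ → (φ ∨ ¬φ)`. -/
def prec (φ ψ : PFormula) : PFormula := .arr ψ (.or φ (.neg φ))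

/-- `φ` is a (substitution instance of a) classical tautology. -/
def IsTaut (φ : PFormula) : Prop :=
  ∀ v : PFormula → Bool, (∀ ψ, v (.neg ψ) = !v ψ) →
    (∀ ψ χ, v (.or ψ χ) = (v ψ || v χ)) → v φ = true

end PFormula

/-- Terms of the type ⟨⊕, ⊙⟩ of the algebra of contents. -/
inductive Trm where
  | var : ℕ → Trm
  | oplus : Trm → Trm → Trm
  | odot : Trm → Trm → Trm

open PFormula

/-- The translation `N` from formulas to content terms: transparent for ¬ and □,
sending ∨ to ⊕ and → to ⊙. -/
def N : PFormula → Trm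
  | .var p => .var p
  | .neg φ => N φ
  | .box φ => N φ
  | .or φ ψ => .oplus (N φ) (N ψ)
  | .arr φ ψ => .odot (N φ) (N ψ)

/-- The relation `~Γ` on translated formulas: `N(φ) ~Γ N(ψ)` iff both `φ≺ψ ∈ Γ`
and `ψ≺φ ∈ Γ`. -/
def simGamma (Γ : Set PFormula) (s t : Trm) : Prop :=
  ∃ φ ψ : PFormula, N φ = s ∧ N ψ = t ∧ prec φ ψ ∈ Γ ∧ prec ψ φ ∈ Γ

lemma taut_and_intro (a b : PFormula) : IsTaut (imp a (imp b (PFormula.and a b))) := by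
  intro v h1 h2
  simp only [imp, PFormula.and, h1, h2]
  cases v a <;> cases v b <;> simp

/-- In PAI⁰, for a theory Γ (closed under modus ponens, containing classical logic and
axioms O1, O2, O4, C1, C2, C3), the relation `~Γ` is a congruence w.r.t. ⊕ and ⊙. -/
theorem simGamma_congruence
    (Γ : Set PFormula)
    (htaut : ∀ φ, IsTaut φ → φ ∈ Γ)
    (hmp : ∀ φ ψ, imp φ ψ ∈ Γ → φ ∈ Γ → ψ ∈ Γ)
    (hO1 : ∀ φ, prec φ φ ∈ Γ)
    (hO2 : ∀ φ ψ χ, imp (and (prec φ ψ) (prec ψ χ)) (prec φ χ) ∈ Γ)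
    (hO4 : ∀ φ ψ, and (eqv (prec φ ψ) (prec φ (.neg ψ)))
      (eqv (prec φ ψ) (prec (.neg φ) ψ)) ∈ Γ)
    (hC1 : ∀ φ ψ, and (prec φ (.or φ ψ)) (prec ψ (.or φ ψ)) ∈ Γ)
    (hC2 : ∀ φ ψ χ, imp (and (prec φ χ) (prec ψ χ)) (prec (.or φ ψ) χ) ∈ Γ)
    (hC3 : ∀ φ χ ψ ζ, imp (and (and (prec φ χ) (prec χ φ)) (and (prec ψ ζ) (prec ζ ψ)))
      (prec (.arr φ ψ) (.arr χ ζ)) ∈ Γ) :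
    ∀ φ₁ ψ₁ φ₂ ψ₂ : PFormula,
      simGamma Γ (N φ₁) (N ψ₁) → simGamma Γ (N φ₂) (N ψ₂) →
      simGamma Γ (.oplus (N φ₁) (N φ₂)) (.oplus (N ψ₁) (N ψ₂)) ∧
      simGamma Γ (.odot (N φ₁) (N φ₂)) (.odot (N ψ₁) (N ψ₂)) := by
  have handI : ∀ a b, a ∈ Γ → b ∈ Γ → PFormula.and a b ∈ Γ := fun a b ha hb =>
    hmp _ _ (hmp _ _ (htaut _ (taut_and_intro a b)) ha) hb
  have htrans : ∀ φ ψ χ, prec φ ψ ∈ Γ → prec ψ χ ∈ Γ → prec φ χ ∈ Γ := fun φ ψ χ h1 h2 =>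
    hmp _ _ (hO2 φ ψ χ) (handI _ _ h1 h2)
  have hC1l : ∀ φ ψ, prec φ (.or φ ψ) ∈ Γ := by
    intro φ ψ
    have := hC1 φ ψ
    have taut : IsTaut (imp (PFormula.and (prec φ (.or φ ψ)) (prec ψ (.or φ ψ)))
        (prec φ (.or φ ψ))) := by
      intro v h1 h2
      simp only [imp, PFormula.and, h1, h2]
      cases v (prec φ (.or φ ψ)) <;> simp
    exact hmp _ _ (htaut _ taut) this
  have hC1r : ∀ φ ψ, prec ψ (.or φ ψ) ∈ Γ := by
    intro φ ψ
    have := hC1 φ ψ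
    have taut : IsTaut (imp (PFormula.and (prec φ (.or φ ψ)) (prec ψ (.or φ ψ)))
        (prec ψ (.or φ ψ))) := by
      intro v h1 h2
      simp only [imp, PFormula.and, h1, h2]
      cases v (prec φ (.or φ ψ)) <;> cases v (prec ψ (.or φ ψ)) <;> simp
    exact hmp _ _ (htaut _ taut) this
  rintro φ₁ ψ₁ φ₂ ψ₂ ⟨a, b, ha, hb, hab, hba⟩ ⟨c, d, hc, hd, hcd, hdc⟩
  constructor
  · refine ⟨.or a c, .or b d, by simp [N, ha, hc], by simp [N, hb, hd], ?_, ?_⟩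
    · exact hmp _ _ (hC2 a c (.or b d))
        (handI _ _ (htrans _ b _ hab (hC1l b d)) (htrans _ d _ hcd (hC1r b d)))
    · exact hmp _ _ (hC2 b d (.or a c))
        (handI _ _ (htrans _ a _ hba (hC1l a c)) (htrans _ c _ hdc (hC1r a c)))
  · refine ⟨.arr a c, .arr b d, by simp [N, ha, hc], by simp [N, hb, hd], ?_, ?_⟩
    · exact hmp _ _ (hC3 a b c d) (handI _ _ (handI _ _ hab hba) (handI _ _ hcd hdc))
    · exact hmp _ _ (hC3 b a d c) (handI _ _ (handI _ _ hba hab) (handI _ _ hdc hcd))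
end
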